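/- arXiv:0906.5133 — 2 statements merged into one kernel-verified Lean document; each statement's English description precedes it below -/
import Mathlib

section
/- Let P : ℂ → ℝ be a real-valued polynomial in Re w and Im w that is subharmonic (ΔP ≥ 0 on ℂ) and whose Laplacian ΔP does not vanish identically. If φ : ℂ → ℂ is an entire holomorphic function such that the composition P ∘ φ : ℂ → ℝ is harmonic on ℂ, then φ is constant. -/
/-!
For entire `φ` and any `C²` function `u`, the chain rule gives
`Δ(u ∘ φ) = |φ'|² · (Δu ∘ φ)`: the terms in `φ''` cancel because `I * I = -1`, and the
quadratic form of `D²u` summed over the orthogonal pair `φ', I φ'`, both of length `|φ'|`,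
equals `|φ'|²` times its trace. So if `u ∘ φ` is harmonic and `φ` is not constant, `Δu ∘ φ`
vanishes off the zeros of `φ'`, which have empty interior, hence everywhere by continuity.
A nonconstant entire function has dense image (Liouville applied to `1 / (φ - x)`), so `Δu`
vanishes identically.
-/

/-- The Laplacian of a function `u : ℂ → ℝ` in the real coordinates of `ℂ`. -/
noncomputable def lap (u : ℂ → ℝ) (z : ℂ) : ℝ :=
  fderiv ℝ (fun w => fderiv ℝ u w 1) z 1 +
    fderiv ℝ (fun w => fderiv ℝ u w Complex.I) z Complex.I

/-- The real polynomial map `ℂ → ℝ` associated to a polynomial with real coefficients in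
the two real variables `Re w`, `Im w`. -/
noncomputable def polyMap (p : MvPolynomial (Fin 2) ℝ) (w : ℂ) : ℝ :=
  MvPolynomial.eval ![w.re, w.im] p

open Complex

lemma contDiff_polyMap (p : MvPolynomial (Fin 2) ℝ) {n : WithTop ℕ∞} :
    ContDiff ℝ n (polyMap p) := by
  have hcoord : polyMap p = fun w => MvPolynomial.eval (fun i => ![reCLM, imCLM] i w) p := by
    funext w
    have hw : ![w.re, w.im] = fun i => ![reCLM, imCLM] i w := by
      ext i; fin_cases i <;> rfl
    rw [polyMap, hw]
  rw [hcoord]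
  exact (AnalyticOnNhd.eval_continuousLinearMap' _ p).contDiff

lemma ContinuousLinearMap.apply_self_add_apply_I_mul_self {F : Type*} [NormedAddCommGroup F]
    [NormedSpace ℝ F] (B : ℂ →L[ℝ] ℂ →L[ℝ] F) (a : ℂ) :
    B a a + B (I * a) (I * a) = normSq a • (B 1 1 + B I I) := by
  have ha : a = a.re • (1 : ℂ) + a.im • I := by simp
  have hIa : I * a = (-a.im) • (1 : ℂ) + a.re • I := by simp [Complex.ext_iff]
  rw [hIa, ha]
  simp only [map_add, map_smul, add_apply, smul_apply, smul_add, smul_smul, normSq_apply, add_re,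
    add_im, smul_re, smul_im, one_re, one_im, I_re, I_im]
  module

section SecondDerivative

variable {u : ℂ → ℝ}

lemma fderiv_fderiv_apply_const (hu : ContDiff ℝ 2 u) (x v e : ℂ) :
    fderiv ℝ (fun w => fderiv ℝ u w e) x v = fderiv ℝ (fderiv ℝ u) x v e := by
  have hD : Differentiable ℝ (fderiv ℝ u) := (hu.fderiv_right le_rfl).differentiable one_ne_zero
  rw [fderiv_clm_apply (hD x) (differentiableAt_const e)]
  simp

lemma lap_eq_fderiv_fderiv (hu : ContDiff ℝ 2 u) (x : ℂ) :
    lap u x = fderiv ℝ (fderiv ℝ u) x 1 1 + fderiv ℝ (fderiv ℝ u) x I I := by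
  rw [lap, fderiv_fderiv_apply_const hu, fderiv_fderiv_apply_const hu]

lemma continuous_lap (hu : ContDiff ℝ 2 u) : Continuous (lap u) := by
  have hD2 : Continuous (fderiv ℝ (fderiv ℝ u)) :=
    (hu.fderiv_right le_rfl).continuous_fderiv one_ne_zero
  simp_rw [funext (lap_eq_fderiv_fderiv hu)]
  fun_prop

variable {φ : ℂ → ℂ}

lemma fderiv_comp_holomorphic_apply (hu : Differentiable ℝ u) (hφ : Differentiable ℂ φ)
    (w e : ℂ) :
    fderiv ℝ (fun z => u (φ z)) w e = fderiv ℝ u (φ w) (e * deriv φ w) := by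
  have h := (hu (φ w)).hasFDerivAt.comp w ((hφ w).hasDerivAt.hasFDerivAt.restrictScalars ℝ)
  rw [show (fun z => u (φ z)) = u ∘ φ from rfl, h.fderiv]
  simp

lemma fderiv_fderiv_comp_holomorphic_apply (hu : ContDiff ℝ 2 u) (hφ : Differentiable ℂ φ)
    (z v e : ℂ) :
    fderiv ℝ (fun w => fderiv ℝ (fun z => u (φ z)) w e) z v =
      fderiv ℝ (fderiv ℝ u) (φ z) (v * deriv φ z) (e * deriv φ z) +
        fderiv ℝ u (φ z) (v * (e * deriv (deriv φ) z)) := by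
  have hD : Differentiable ℝ (fderiv ℝ u) := (hu.fderiv_right le_rfl).differentiable one_ne_zero
  simp_rw [fderiv_comp_holomorphic_apply (hu.differentiable two_ne_zero) hφ]
  have hDφ : HasFDerivAt (fun w => fderiv ℝ u (φ w)) _ z :=
    (hD (φ z)).hasFDerivAt.comp z ((hφ z).hasDerivAt.hasFDerivAt.restrictScalars ℝ)
  have hφ' := (((hφ.deriv z).hasDerivAt.const_mul e).hasFDerivAt.restrictScalars ℝ)
  rw [(hDφ.clm_apply hφ').fderiv]
  simp [add_comm]

lemma lap_comp_holomorphic (hu : ContDiff ℝ 2 u) (hφ : Differentiable ℂ φ) (z : ℂ) :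
    lap (fun w => u (φ w)) z = normSq (deriv φ z) * lap u (φ z) := by
  have hII : I * (I * deriv (deriv φ) z) = -(1 * (1 * deriv (deriv φ) z)) := by
    rw [← mul_assoc, I_mul_I]; ring
  rw [lap, fderiv_fderiv_comp_holomorphic_apply hu hφ, fderiv_fderiv_comp_holomorphic_apply hu hφ,
    hII, map_neg, add_add_add_comm, add_neg_cancel, add_zero, one_mul,
    ContinuousLinearMap.apply_self_add_apply_I_mul_self, lap_eq_fderiv_fderiv hu, smul_eq_mul]

end SecondDerivative

lemma eq_zero_of_eq_zero_where_ne_zero {f : ℂ → ℂ} {g : ℂ → ℝ} (hf : Differentiable ℂ f)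
    (hf0 : ∃ z, f z ≠ 0) (hg : Continuous g) (h : ∀ z, f z ≠ 0 → g z = 0) : g = 0 := by
  by_contra! hg0
  obtain ⟨z₀, hz₀⟩ := Function.ne_iff.1 hg0
  have hf_near : f =ᶠ[nhds z₀] 0 := by
    filter_upwards [hg.continuousAt.eventually_ne hz₀] with z hz
    by_contra hfz
    exact hz (h z hfz)
  obtain ⟨z, hz⟩ := hf0
  have hf_analytic : AnalyticOnNhd ℂ f Set.univ := analyticOnNhd_univ_iff_differentiable.2 hf
  exact hz (hf_analytic.eqOn_zero_of_preconnected_of_eventuallyEq_zero isPreconnected_univ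
    (Set.mem_univ z₀) hf_near (Set.mem_univ z))

lemma Differentiable.denseRange_of_ne {E : Type*} [NormedAddCommGroup E] [NormedSpace ℂ E]
    {f : E → ℂ} (hf : Differentiable ℂ f) {s t : E} (hst : f s ≠ f t) : DenseRange f := by
  rw [Metric.denseRange_iff]
  intro x r hr
  by_contra! hfar
  have hne : ∀ y, f y - x ≠ 0 := fun y hy => by
    have := hfar y
    rw [dist_comm, dist_eq_norm, hy, norm_zero] at this
    exact this.not_gt hr
  have hbdd : Bornology.IsBounded (Set.range fun y => (f y - x)⁻¹) := by
    refine (Metric.isBounded_iff_subset_closedBall 0).2 ⟨r⁻¹, ?_⟩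
    rintro _ ⟨y, rfl⟩
    rw [Metric.mem_closedBall, dist_zero_right, norm_inv, ← dist_eq_norm, dist_comm]
    exact inv_anti₀ hr (hfar y)
  exact hst (sub_left_inj.1 (inv_injective (((hf.sub_const x).inv hne).apply_eq_apply_of_bounded
    hbdd s t)))

lemma apply_eq_apply_of_lap_comp_eq_zero {u : ℂ → ℝ} {φ : ℂ → ℂ}
    (hu : ContDiff ℝ 2 u) (hu0 : ∃ x, lap u x ≠ 0) (hφ : Differentiable ℂ φ)
    (hharm : ∀ z, lap (fun w => u (φ w)) z = 0) (s t : ℂ) : φ s = φ t := by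
  by_contra hst
  have hφ' : ∃ z, deriv φ z ≠ 0 := by
    by_contra! h
    exact hst (is_const_of_deriv_eq_zero hφ h s t)
  have hlap_comp : (fun z => lap u (φ z)) = 0 := by
    refine eq_zero_of_eq_zero_where_ne_zero hφ.deriv hφ' ((continuous_lap hu).comp hφ.continuous)
      fun z hz => ?_
    have h := lap_comp_holomorphic hu hφ z
    rw [hharm z, eq_comm, mul_eq_zero] at h
    exact h.resolve_left (normSq_eq_zero.not.2 hz)
  obtain ⟨x, hx⟩ := hu0
  exact hx (congrFun ((hφ.denseRange_of_ne hst).equalizer (continuous_lap hu) continuous_const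
    hlap_comp) x)

theorem entire_const_of_comp_harmonic_general
    (p : MvPolynomial (Fin 2) ℝ)
    (hnz : ∃ z : ℂ, lap (polyMap p) z ≠ 0)
    (φ : ℂ → ℂ) (hφ : Differentiable ℂ φ)
    (hharm : ∀ z : ℂ, lap (fun w => polyMap p (φ w)) z = 0) :
    ∀ s t : ℂ, φ s = φ t :=
  apply_eq_apply_of_lap_comp_eq_zero (contDiff_polyMap p) hnz hφ hharm

/-- If `P` is a subharmonic real polynomial in `Re w, Im w` whose Laplacian does not vanish
identically, and `φ : ℂ → ℂ` is entire with `P ∘ φ` harmonic on `ℂ`, then `φ` is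
constant. -/
theorem entire_const_of_comp_harmonic
    (p : MvPolynomial (Fin 2) ℝ)
    (hsub : ∀ z : ℂ, 0 ≤ lap (polyMap p) z)
    (hnz : ∃ z : ℂ, lap (polyMap p) z ≠ 0)
    (φ : ℂ → ℂ) (hφ : Differentiable ℂ φ)
    (hharm : ∀ z : ℂ, lap (fun w => polyMap p (φ w)) z = 0) :
    ∀ s t : ℂ, φ s = φ t :=
  entire_const_of_comp_harmonic_general p hnz φ hφ hharm
end

section
/- Let (X, d) be a complete metric space and let M : X → ℝ≥0 be a locally bounded function. Then for every σ > 0 and every u ∈ X with M(u) > 0 there exists v ∈ X such that: (i) d(u, v) ≤ 2/(σ M(u)); (ii) M(v) ≥ M(u); and (iii) M(x) ≤ 2 M(v) for every x ∈ X with d(x, v) ≤ 1/(σ M(v)). -/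
/-!
Call `v` admissible if `M(u) ≤ M(v)` and `d(u, v) + 2/(σ M(v)) ≤ 2/(σ M(u))`; admissible points
satisfy (i) and (ii), and `u` is admissible. If no point works, then every admissible `v` has a
point `x` with `d(x, v) ≤ 1/(σ M(v))` and `M(x) > 2 M(v)`, and `x` is again admissible, since
`d(u, v) + 2/(σ M(v))` cannot increase along such a jump. Iterating from `u` gives a sequence on
which `M` at least doubles at each step while the step lengths decay geometrically: it is
Cauchy, hence converges, and `M` is unbounded near its limit.
-/

open Filter Topology

theorem exists_seq_of_forall_exists_rel {α : Type*} {S : Set α} {r : α → α → Prop} {a : α}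
    (ha : a ∈ S) (h : ∀ x ∈ S, ∃ y ∈ S, r x y) :
    ∃ f : ℕ → α, f 0 = a ∧ ∀ n, f n ∈ S ∧ r (f n) (f (n + 1)) := by
  choose g hgS hgr using h
  let F : ℕ → S := fun n => (fun x : S => ⟨g x x.2, hgS x x.2⟩)^[n] ⟨a, ha⟩
  refine ⟨fun n => F n, rfl, fun n => ⟨(F n).2, ?_⟩⟩
  simp only [F, Function.iterate_succ_apply']
  exact hgr _ _

theorem not_tendsto_atTop_of_cauchySeq {X α : Type*} [UniformSpace X] [CompleteSpace X]
    [Preorder α] [NoMaxOrder α] {M : X → α}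
    (hloc : ∀ x : X, ∃ s ∈ 𝓝 x, ∃ C : α, ∀ y ∈ s, M y ≤ C) {f : ℕ → X} (hf : CauchySeq f) :
    ¬ Tendsto (fun n => M (f n)) atTop atTop := by
  intro hM
  obtain ⟨w, hw⟩ := cauchySeq_tendsto_of_complete hf
  obtain ⟨s, hs, C, hC⟩ := hloc w
  obtain ⟨n, hn_mem, hn_gt⟩ := ((hw.eventually_mem hs).and (hM.eventually_gt_atTop C)).exists
  exact (hn_gt.trans_le (hC _ hn_mem)).false

theorem dist_add_two_div_le_of_jump {X : Type*} [PseudoMetricSpace X] {u v x : X} {σ a b : ℝ}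
    (hσ : 0 < σ) (ha : 0 < a) (hab : 2 * a < b) (hxv : dist x v ≤ 1 / (σ * a)) :
    dist u x + 2 / (σ * b) ≤ dist u v + 2 / (σ * a) := by
  have hjump : 2 / (σ * b) ≤ 1 / (σ * a) := by
    rw [div_le_div_iff₀ (by nlinarith) (by positivity)]
    nlinarith
  have htwo : 2 / (σ * a) = 1 / (σ * a) + 1 / (σ * a) := by ring
  linarith [dist_triangle u v x, dist_comm x v]

theorem cauchySeq_of_dist_le_inv_of_doubling {X : Type*} [PseudoMetricSpace X] {f : ℕ → X}
    {m : ℕ → ℝ} {σ : ℝ} (hσ : 0 < σ) (hm₀ : 0 < m 0) (hm : ∀ n, 2 * m n ≤ m (n + 1))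
    (hf : ∀ n, dist (f n) (f (n + 1)) ≤ 1 / (σ * m n)) : CauchySeq f := by
  refine cauchySeq_of_le_geometric_two (C := 2 / (σ * m 0)) fun n => ?_
  have hpow : 2 ^ n * m 0 ≤ m n := geom_le zero_le_two n fun k _ => hm k
  calc dist (f n) (f (n + 1)) ≤ 1 / (σ * m n) := hf n
    _ ≤ 1 / (σ * (2 ^ n * m 0)) := by gcongr
    _ = 2 / (σ * m 0) / 2 / 2 ^ n := by field_simp

/-- **Berteloot's localization lemma.** Let `(X, d)` be a complete metric space and
`M : X → ℝ≥0` a locally bounded function. Then for every `σ > 0` and every `u ∈ X` with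
`M u > 0` there is `v ∈ X` with `d(u,v) ≤ 2/(σ M(u))`, `M(v) ≥ M(u)`, and `M(x) ≤ 2 M(v)`
whenever `d(x,v) ≤ 1/(σ M(v))`. -/
theorem exists_pt_of_locally_bounded
    {X : Type*} [MetricSpace X] [CompleteSpace X]
    (M : X → NNReal)
    (hloc : ∀ x : X, ∃ s ∈ 𝓝 x, ∃ C : NNReal, ∀ y ∈ s, M y ≤ C)
    (σ : ℝ) (hσ : 0 < σ) (u : X) (hu : 0 < M u) :
    ∃ v : X,
      dist u v ≤ 2 / (σ * (M u : ℝ)) ∧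
      M u ≤ M v ∧
      ∀ x : X, dist x v ≤ 1 / (σ * (M v : ℝ)) → M x ≤ 2 * M v := by
  by_contra! hcon
  have hMu : (0 : ℝ) < M u := hu
  obtain ⟨f, rfl, hf⟩ := exists_seq_of_forall_exists_rel
    (S := {v | M u ≤ M v ∧ dist u v + 2 / (σ * M v) ≤ 2 / (σ * M u)})
    (r := fun v x => dist x v ≤ 1 / (σ * M v) ∧ 2 * M v < M x) (a := u)
    ⟨le_rfl, by simp⟩ (by
      rintro v ⟨hMv, hpot⟩
      have hvu : dist u v ≤ 2 / (σ * M u) :=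
        le_trans (le_add_of_nonneg_right (by positivity)) hpot
      obtain ⟨x, hxv, hMx⟩ := hcon v hvu hMv
      have hMx' : 2 * (M v : ℝ) < M x := by exact_mod_cast hMx
      have hMux : M u ≤ M x := hMv.trans ((le_mul_of_one_le_left zero_le one_le_two).trans hMx.le)
      exact ⟨x, ⟨hMux, (dist_add_two_div_le_of_jump hσ (hMu.trans_le hMv) hMx' hxv).trans hpot⟩,
        hxv, hMx'⟩)
  have hgrowth : ∀ n, 2 * (M (f n) : ℝ) ≤ M (f (n + 1)) := fun n => (hf n).2.2.le
  have hcauchy : CauchySeq f := cauchySeq_of_dist_le_inv_of_doubling hσ hMu hgrowth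
    fun n => dist_comm (f n) _ ▸ (hf n).2.1
  exact not_tendsto_atTop_of_cauchySeq hloc hcauchy
    (NNReal.tendsto_coe_atTop.1 (tendsto_atTop_of_geom_le hMu one_lt_two hgrowth))
end
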